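/- arXiv:2010.00754 — 3 statements merged into one kernel-verified Lean document; each statement's English description precedes it below -/
import Mathlib

section
/- Let λ ≥ 0 and S_f < S_s (fast disk has smaller service time), with S_f > 0, λS_f < 1 and λS_s < 1. If φ* ∈ (0,1) minimizes F(φ) = (φS_f)/(1-φλS_f) + ((1-φ)S_s)/(1-(1-φ)λS_s) over [0,1], then φ* > 1/2. -/
/-- If the fast disk is strictly faster (`S_f < S_s`), any interior minimizer of
the dual response time routes strictly more than half the traffic to it. -/
theorem optimal_fraction_gt_half (Sf Ss lam : ℝ) (hSf : 0 < Sf) (hSs : 0 < Ss)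
    (hlam : 0 ≤ lam) (hf : lam * Sf < 1) (hs : lam * Ss < 1) (hlt : Sf < Ss)
    (φs : ℝ) (hmem : φs ∈ Set.Ioo (0 : ℝ) 1)
    (hmin : ∀ ψ ∈ Set.Icc (0 : ℝ) 1,
      (φs * Sf) / (1 - φs * lam * Sf) + ((1 - φs) * Ss) / (1 - (1 - φs) * lam * Ss) ≤
      (ψ * Sf) / (1 - ψ * lam * Sf) + ((1 - ψ) * Ss) / (1 - (1 - ψ) * lam * Ss)) :
    1 / 2 < φs := by
  by_contra hcon
  push_neg at hcon
  obtain ⟨h0, h1⟩ := hmem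
  set F : ℝ → ℝ := fun φ =>
    (φ * Sf) / (1 - φ * lam * Sf) + ((1 - φ) * Ss) / (1 - (1 - φ) * lam * Ss) with hF
  -- positivity of denominators at φs
  have hA : 0 < 1 - φs * lam * Sf := by nlinarith [mul_nonneg hlam hSf.le]
  have hB : 0 < 1 - (1 - φs) * lam * Ss := by nlinarith [mul_nonneg hlam hSs.le]
  -- B ≤ A since φs ≤ 1/2 ≤ 1 - φs and Sf < Ss
  have hBA : 1 - (1 - φs) * lam * Ss ≤ 1 - φs * lam * Sf := by
    nlinarith [mul_nonneg hlam hSf.le, mul_nonneg hlam hSs.le,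
      mul_nonneg (mul_nonneg hlam hSs.le) (by linarith : (0:ℝ) ≤ 1 - 2*φs)]
  -- the derivative of F at φs
  have hD1 : HasDerivAt (fun φ : ℝ => (φ * Sf) / (1 - φ * lam * Sf))
      ((1 * Sf * (1 - φs * lam * Sf) - (φs * Sf) * (0 - (1 * lam * Sf))) /
        (1 - φs * lam * Sf) ^ 2) φs := by
    exact HasDerivAt.div ((hasDerivAt_id φs).mul_const Sf)
      ((hasDerivAt_const φs 1).sub (((hasDerivAt_id φs).mul_const lam).mul_const Sf))
      (ne_of_gt hA)
  have hD2 : HasDerivAt (fun φ : ℝ => ((1 - φ) * Ss) / (1 - (1 - φ) * lam * Ss))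
      (((0 - 1) * Ss * (1 - (1 - φs) * lam * Ss) - ((1 - φs) * Ss) * (0 - ((0 - 1) * lam * Ss))) /
        (1 - (1 - φs) * lam * Ss) ^ 2) φs := by
    have hu : HasDerivAt (fun φ : ℝ => 1 - φ) (0 - 1) φs :=
      (hasDerivAt_const φs 1).sub (hasDerivAt_id φs)
    exact HasDerivAt.div (hu.mul_const Ss)
      ((hasDerivAt_const φs 1).sub ((hu.mul_const lam).mul_const Ss)) (ne_of_gt hB)
  have hDF : HasDerivAt F
      (Sf / (1 - φs * lam * Sf) ^ 2 - Ss / (1 - (1 - φs) * lam * Ss) ^ 2) φs := by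
    have := hD1.add hD2
    refine this.congr_deriv ?_
    rw [div_add_div _ _ (pow_ne_zero 2 hA.ne') (pow_ne_zero 2 hB.ne'),
      div_sub_div _ _ (pow_ne_zero 2 hA.ne') (pow_ne_zero 2 hB.ne'),
      div_eq_div_iff (mul_ne_zero (pow_ne_zero 2 hA.ne') (pow_ne_zero 2 hB.ne'))
        (mul_ne_zero (pow_ne_zero 2 hA.ne') (pow_ne_zero 2 hB.ne'))]
    ring
  -- the derivative is negative
  have hDneg : Sf / (1 - φs * lam * Sf) ^ 2 - Ss / (1 - (1 - φs) * lam * Ss) ^ 2 < 0 := by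
    rw [sub_neg, div_lt_div_iff₀ (by positivity) (by positivity)]
    nlinarith [pow_le_pow_left₀ hB.le hBA 2, pow_pos hB 2]
  -- hence F decreases just to the right of φs
  have hslope : Filter.Tendsto (slope F φs) (nhdsWithin φs {φs}ᶜ)
      (nhds (Sf / (1 - φs * lam * Sf) ^ 2 - Ss / (1 - (1 - φs) * lam * Ss) ^ 2)) :=
    hasDerivAt_iff_tendsto_slope.mp hDF
  have hmono : nhdsWithin φs (Set.Ioi φs) ≤ nhdsWithin φs {φs}ᶜ :=
    nhdsWithin_mono φs (fun y hy => ne_of_gt hy)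
  have hev1 : ∀ᶠ y in nhdsWithin φs (Set.Ioi φs), slope F φs y < 0 :=
    (hslope.mono_left hmono).eventually_lt_const hDneg
  have hev2 : ∀ᶠ y in nhdsWithin φs (Set.Ioi φs), y ∈ Set.Ioo φs 1 := by
    have : Set.Ioo φs 1 ∈ nhdsWithin φs (Set.Ioi φs) :=
      Ioo_mem_nhdsGT_of_mem ⟨le_refl φs, h1⟩
    exact this
  obtain ⟨ψ, hψs, hψm⟩ := (hev1.and hev2).exists
  have hψgt : φs < ψ := hψm.1
  have hFlt : F ψ < F φs := by
    rw [slope_def_field] at hψs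
    have hpos : 0 < ψ - φs := by linarith
    by_contra hge
    push_neg at hge
    exact absurd hψs (not_lt.mpr (div_nonneg (by linarith) hpos.le))
  have := hmin ψ ⟨by linarith, hψm.2.le⟩
  simp only [hF] at hFlt
  linarith
end

section
/- Let λ > 0 and S_1 ≤ S_2 ≤ … ≤ S_m with all S_k > 0 and λS_k < 1. Any minimizer φ* of G(φ) = Σ_k (φ_k S_k)/(1 - φ_k λS_k) over the simplex satisfies φ*_1 ≥ φ*_2 ≥ … ≥ φ*_m. -/
/-!
If `φ i < φ j` although queue `i` is at least as fast as queue `j`, give both queues the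
mean traffic `(φ i + φ j) / 2`. The cost `x ↦ x s / (1 - x λ s)` of a queue is strictly convex
in its load `x`, and the excess cost of a slower queue over a faster one is increasing in `x`;
together these make the averaged routing strictly cheaper, contradicting minimality.
-/

open Set

theorem StrictConvexOn.midpoint_add_midpoint_lt {D : Set ℝ} {f g : ℝ → ℝ}
    (hf : StrictConvexOn ℝ D f) (hg : ConvexOn ℝ D g) (hgf : MonotoneOn (fun x => g x - f x) D)
    {a b : ℝ} (ha : a ∈ D) (hb : b ∈ D) (hab : a < b) :
    f ((a + b) / 2) + g ((a + b) / 2) < f a + g b := by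
  have hmid : (1 / 2 : ℝ) • a + (1 / 2 : ℝ) • b = (a + b) / 2 := by
    simp only [smul_eq_mul]; ring
  have hf_mid := hf.2 ha hb hab.ne one_half_pos one_half_pos (add_halves 1)
  have hg_mid := hg.2 ha hb one_half_pos.le one_half_pos.le (add_halves 1)
  have hexch := hgf ha hb hab.le
  rw [hmid] at hf_mid hg_mid
  simp only [smul_eq_mul] at hf_mid hg_mid
  linarith

theorem Fintype.sum_average_swap {ι : Type*} [Fintype ι] [DecidableEq ι] (φ : ι → ℝ)
    (i j : ι) :
    ∑ k, (φ k + φ (Equiv.swap i j k)) / 2 = ∑ k, φ k := by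
  rw [← Finset.sum_div, Finset.sum_add_distrib, Equiv.sum_comp, add_self_div_two]

theorem Fintype.sum_average_swap_sub {ι : Type*} [Fintype ι] [DecidableEq ι]
    (f : ι → ℝ → ℝ) (φ : ι → ℝ) {i j : ι} (hij : i ≠ j) :
    ∑ k, f k ((φ k + φ (Equiv.swap i j k)) / 2) - ∑ k, f k (φ k) =
      f i ((φ i + φ j) / 2) + f j ((φ i + φ j) / 2) - f i (φ i) - f j (φ j) := by
  rw [← Finset.sum_sub_distrib, Fintype.sum_eq_add i j hij fun k ⟨hki, hkj⟩ => ?_]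
  · rw [Equiv.swap_apply_left, Equiv.swap_apply_right, add_comm (φ j)]
    ring
  · rw [Equiv.swap_apply_of_ne_of_ne hki hkj, add_self_div_two, sub_self]

noncomputable def queueCost (lam s x : ℝ) : ℝ := x * s / (1 - x * lam * s)

section queueCost

variable {lam s t : ℝ}

theorem strictConvexOn_queueCost (hlam : 0 < lam) (hs : 0 < s) :
    StrictConvexOn ℝ (Iio (1 / (lam * s))) (queueCost lam s) := by
  refine ⟨convex_Iio _, fun x hx y hy hxy a b ha hb hab => ?_⟩
  have hls : 0 < lam * s := mul_pos hlam hs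
  have hu : 0 < 1 - x * lam * s := by linarith [(lt_div_iff₀ hls).1 hx]
  have hv : 0 < 1 - y * lam * s := by linarith [(lt_div_iff₀ hls).1 hy]
  obtain rfl : b = 1 - a := by linarith
  have hw : 0 < 1 - (a * x + (1 - a) * y) * lam * s := by nlinarith
  simp only [queueCost, smul_eq_mul]
  rw [mul_div_assoc', mul_div_assoc', div_add_div _ _ hu.ne' hv.ne',
    div_lt_div_iff₀ hw (mul_pos hu hv)]
  have hgap : 0 < a * (1 - a) * lam * s ^ 2 * (x - y) ^ 2 := by
    have := sub_ne_zero.2 hxy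
    positivity
  linear_combination hgap

theorem queueCost_sub_queueCost {x : ℝ} (ht : 1 - x * lam * t ≠ 0)
    (hs : 1 - x * lam * s ≠ 0) :
    queueCost lam t x - queueCost lam s x =
      x * (t - s) / ((1 - x * lam * t) * (1 - x * lam * s)) := by
  rw [queueCost, queueCost, div_sub_div _ _ ht hs]
  ring

theorem monotoneOn_queueCost_sub (hlam : 0 < lam) (hs : 0 ≤ s) (hst : s ≤ t) :
    MonotoneOn (fun x => queueCost lam t x - queueCost lam s x) (Ico 0 (1 / (lam * t))) := by
  intro x ⟨hx0, hxt⟩ y ⟨hy0, hyt⟩ hxy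
  have hlt : 0 < lam * t := one_div_pos.1 (hx0.trans_lt hxt)
  have hxt : 0 < 1 - x * lam * t := by linarith [(lt_div_iff₀ hlt).1 hxt]
  have hyt : 0 < 1 - y * lam * t := by linarith [(lt_div_iff₀ hlt).1 hyt]
  have hxs : 0 < 1 - x * lam * s := by
    nlinarith [mul_le_mul_of_nonneg_left hst (mul_nonneg hx0 hlam.le)]
  have hys : 0 < 1 - y * lam * s := by
    nlinarith [mul_le_mul_of_nonneg_left hst (mul_nonneg hy0 hlam.le)]
  simp only [queueCost_sub_queueCost hxt.ne' hxs.ne', queueCost_sub_queueCost hyt.ne' hys.ne']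
  have hden :
      (1 - y * lam * t) * (1 - y * lam * s) ≤ (1 - x * lam * t) * (1 - x * lam * s) := by
    apply mul_le_mul <;> nlinarith [mul_le_mul_of_nonneg_right hxy (mul_nonneg hlam.le hs)]
  exact div_le_div₀ (by nlinarith) (by nlinarith) (mul_pos hyt hys) hden

theorem Icc_zero_one_subset_Ico_one_div {r : ℝ} (h0 : 0 < r) (h1 : r < 1) :
    Icc (0 : ℝ) 1 ⊆ Ico 0 (1 / r) :=
  fun _ hx => ⟨hx.1, hx.2.trans_lt ((lt_div_iff₀ h0).2 (by linarith))⟩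

theorem queueCost_midpoint_add_lt (hlam : 0 < lam) (hs : 0 < s) (hst : s ≤ t)
    (ht : lam * t < 1) {a b : ℝ} (ha : 0 ≤ a) (hab : a < b) (hb : b ≤ 1) :
    queueCost lam s ((a + b) / 2) + queueCost lam t ((a + b) / 2) <
      queueCost lam s a + queueCost lam t b := by
  have ht0 : 0 < t := hs.trans_le hst
  have hIs := Icc_zero_one_subset_Ico_one_div (mul_pos hlam hs)
    ((mul_le_mul_of_nonneg_left hst hlam.le).trans_lt ht)
  have hIt := Icc_zero_one_subset_Ico_one_div (mul_pos hlam ht0) ht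
  refine StrictConvexOn.midpoint_add_midpoint_lt (D := Icc 0 1) ?_ ?_
    ((monotoneOn_queueCost_sub hlam hs.le hst).mono hIt) ⟨ha, by linarith⟩ ⟨by linarith, hb⟩
    hab
  · exact (strictConvexOn_queueCost hlam hs).subset (hIs.trans Ico_subset_Iio_self)
      (convex_Icc 0 1)
  · exact (strictConvexOn_queueCost hlam ht0).convexOn.subset (hIt.trans Ico_subset_Iio_self)
      (convex_Icc 0 1)

end queueCost

theorem faster_gets_more_general (m : ℕ) (lam : ℝ) (hlam : 0 < lam)
    (S : Fin m → ℝ) (hS : ∀ k, 0 < S k) (hmono : Monotone S)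
    (hstab : ∀ k, lam * S k < 1)
    (φs : Fin m → ℝ) (hmem : (∀ k, 0 ≤ φs k) ∧ ∑ k, φs k = 1)
    (hmin : ∀ ψ : Fin m → ℝ, (∀ k, 0 ≤ ψ k) → ∑ k, ψ k = 1 →
      ∑ k, (φs k * S k) / (1 - φs k * lam * S k) ≤
      ∑ k, (ψ k * S k) / (1 - ψ k * lam * S k)) :
    ∀ i j : Fin m, i ≤ j → φs j ≤ φs i := by
  intro i j hij
  by_contra! hlt
  have hne : i ≠ j := ne_of_apply_ne φs hlt.ne
  obtain ⟨hnonneg, hsum⟩ := hmem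
  have hj_le_one : φs j ≤ 1 :=
    hsum ▸ Finset.single_le_sum (fun k _ => hnonneg k) (Finset.mem_univ j)
  have hopt := hmin (fun k => (φs k + φs (Equiv.swap i j k)) / 2)
    (fun k => div_nonneg (add_nonneg (hnonneg k) (hnonneg _)) zero_le_two)
    ((Fintype.sum_average_swap φs i j).trans hsum)
  have hchange := Fintype.sum_average_swap_sub (fun k => queueCost lam (S k)) φs hne
  have hgain :=
    queueCost_midpoint_add_lt hlam (hS i) (hmono hij) (hstab j) (hnonneg i) hlt hj_le_one
  simp only [queueCost] at hchange hgain
  linarith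

/-- Faster queues receive larger optimal traffic fractions: a minimizer's
routing probabilities are ordered oppositely to the service times. -/
theorem faster_gets_more (m : ℕ) (hm : 0 < m) (lam : ℝ) (hlam : 0 < lam)
    (S : Fin m → ℝ) (hS : ∀ k, 0 < S k) (hmono : Monotone S)
    (hstab : ∀ k, lam * S k < 1)
    (φs : Fin m → ℝ) (hmem : (∀ k, 0 ≤ φs k) ∧ ∑ k, φs k = 1)
    (hmin : ∀ ψ : Fin m → ℝ, (∀ k, 0 ≤ ψ k) → ∑ k, ψ k = 1 →
      ∑ k, (φs k * S k) / (1 - φs k * lam * S k) ≤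
      ∑ k, (ψ k * S k) / (1 - ψ k * lam * S k)) :
    ∀ i j : Fin m, i ≤ j → φs j ≤ φs i :=
  faster_gets_more_general m lam hlam S hS hmono hstab φs hmem hmin
end

section
/- Let λ ≥ 0, S_f, S_s > 0 with S_f < S_s, λS_f < 1, λS_s < 1. Then F'(1/2) < 0, where F(φ) = (φS_f)/(1-φλS_f) + ((1-φ)S_s)/(1-(1-φ)λS_s); i.e., at the equal-split point the response time is strictly decreasing in the fraction routed to the fast queue. -/
/-! The derivative of the mean response time is `F'(φ) = R(S_f, φλ) - R(S_s, (1-φ)λ)` with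
`R(S, μ) = S / (1 - μS)²`. At `φ = 1/2` both queues see the same load factor `λ/2`, and
`S ↦ S / (1 - aS)²` is strictly increasing on `0 ≤ S < 1/a`, so the faster queue gives the
smaller term. -/

theorem hasDerivAt_mul_div_one_sub_mul (S c x : ℝ) (hx : 1 - x * c * S ≠ 0) :
    HasDerivAt (fun φ : ℝ => φ * S / (1 - φ * c * S)) (S / (1 - x * c * S) ^ 2) x := by
  have hnum : HasDerivAt (fun φ : ℝ => φ * S) S x := by
    simpa using (hasDerivAt_id x).mul_const S
  have hden : HasDerivAt (fun φ : ℝ => 1 - φ * c * S) (-(c * S)) x := by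
    simpa [mul_assoc] using ((hasDerivAt_id x).mul_const (c * S)).const_sub 1
  exact (hnum.div hden hx).congr_deriv (by ring)

theorem div_one_sub_mul_sq_lt_of_lt {a S T : ℝ} (hS : 0 ≤ S) (hST : S < T) (ha : 0 ≤ a)
    (hT : a * T < 1) : S / (1 - a * S) ^ 2 < T / (1 - a * T) ^ 2 := by
  have hT' : 0 < 1 - a * T := by linarith
  have hden : (1 - a * T) ^ 2 ≤ (1 - a * S) ^ 2 := by gcongr
  calc S / (1 - a * S) ^ 2 ≤ S / (1 - a * T) ^ 2 := by gcongr
    _ < T / (1 - a * T) ^ 2 := by gcongr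

theorem deriv_at_half_neg_general (Sf Ss lam : ℝ) (hSf : 0 < Sf)
    (hlam : 0 ≤ lam) (hs : lam * Ss < 1) (hlt : Sf < Ss) :
    deriv (fun φ : ℝ => (φ * Sf) / (1 - φ * lam * Sf)
        + ((1 - φ) * Ss) / (1 - (1 - φ) * lam * Ss)) (1 / 2) < 0 := by
  have hload : lam / 2 * Ss < 1 := by linarith
  have hmono := div_one_sub_mul_sq_lt_of_lt hSf.le hlt (by positivity) hload
  have hfast := hasDerivAt_mul_div_one_sub_mul Sf lam (1 / 2) (by nlinarith)
  have hslow := (hasDerivAt_mul_div_one_sub_mul Ss lam (1 - 1 / 2) (by nlinarith)).comp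
    (1 / 2 : ℝ) ((hasDerivAt_id (1 / 2 : ℝ)).const_sub 1)
  have hF : HasDerivAt (fun φ : ℝ => (φ * Sf) / (1 - φ * lam * Sf)
      + ((1 - φ) * Ss) / (1 - (1 - φ) * lam * Ss)) _ (1 / 2) := hfast.add hslow
  rw [hF.deriv]
  convert sub_neg.mpr hmono using 1
  ring

/-- At the equal split `φ = 1/2`, the dual heterogeneous response time is
strictly decreasing in the fraction routed to the fast queue. -/
theorem deriv_at_half_neg (Sf Ss lam : ℝ) (hSf : 0 < Sf) (hSs : 0 < Ss)
    (hlam : 0 ≤ lam) (hf : lam * Sf < 1) (hs : lam * Ss < 1) (hlt : Sf < Ss) :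
    deriv (fun φ : ℝ => (φ * Sf) / (1 - φ * lam * Sf)
        + ((1 - φ) * Ss) / (1 - (1 - φ) * lam * Ss)) (1 / 2) < 0 :=
  deriv_at_half_neg_general Sf Ss lam hSf hlam hs hlt
end
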